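/- arXiv:1210.6167 — 3 statements merged into one kernel-verified Lean document; each statement's English description precedes it below -/
import Mathlib

section
/- For positive integers n_i, n_j, n_m, the product gcd(n_m,n_j)·gcd(n_i,n_m) divides n_m·gcd(n_i,n_j). -/
theorem stmt_1 (ni nj nm : ℕ) (hi : 0 < ni) (hj : 0 < nj) (hm : 0 < nm) :
    Nat.gcd nm nj * Nat.gcd ni nm ∣ nm * Nat.gcd ni nj := by
  rw [show nm * Nat.gcd ni nj = Nat.gcd (nm * ni) (nm * nj) from
    (Nat.gcd_mul_left nm ni nj).symm]
  refine Nat.dvd_gcd ?_ ?_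
  · exact mul_dvd_mul (Nat.gcd_dvd_left nm nj) (Nat.gcd_dvd_left ni nm)
  · rw [mul_comm nm nj]
    exact mul_dvd_mul (Nat.gcd_dvd_right nm nj) (Nat.gcd_dvd_right ni nm)
end

section
/- Let A, B ∈ M_n(ℤ/pℤ) be symmetric matrices with A - B invertible. Then the block matrix G = ((A-B)⁻¹, -(A-B)⁻¹B; -I_n, A) lies in Sp_{2n}(ℤ/pℤ), and G maps the 2n×n matrix (A; I_n) to (I_n; 0) and maps (B; I_n) to (0; D) for some invertible D ∈ M_n(ℤ/pℤ). -/
open Matrix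

theorem stmt_13 {p n : ℕ} [Fact p.Prime] (A B : Matrix (Fin n) (Fin n) (ZMod p))
    (hA : A.IsSymm) (hB : B.IsSymm) (hAB : IsUnit (A - B)) :
    let J' : Matrix (Fin n ⊕ Fin n) (Fin n ⊕ Fin n) (ZMod p) := Matrix.fromBlocks 0 (-1) 1 0
    let G : Matrix (Fin n ⊕ Fin n) (Fin n ⊕ Fin n) (ZMod p) :=
      Matrix.fromBlocks (A - B)⁻¹ (-((A - B)⁻¹ * B)) (-1) A
    Gᵀ * J' * G = J' ∧
    G * Matrix.fromRows A 1 = Matrix.fromRows 1 0 ∧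
    ∃ D : Matrix (Fin n) (Fin n) (ZMod p), IsUnit D ∧
      G * Matrix.fromRows B 1 = Matrix.fromRows 0 D := by
  intro J' G
  have hdet : IsUnit (A - B).det := (Matrix.isUnit_iff_isUnit_det _).mp hAB
  have h1 : (A - B)⁻¹ * (A - B) = 1 := Matrix.nonsing_inv_mul _ hdet
  have h2 : (A - B) * (A - B)⁻¹ = 1 := Matrix.mul_nonsing_inv _ hdet
  have hSymm : (A - B).IsSymm := hA.sub hB
  have hCsymm : ((A - B)⁻¹)ᵀ = (A - B)⁻¹ := by
    rw [Matrix.transpose_nonsing_inv, hSymm.eq]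
  simp only [J', G]
  set C := (A - B)⁻¹ with hC
  clear_value C
  have hCA : C * A = 1 + C * B := by
    have h : C * A - C * B = 1 := by rw [← Matrix.mul_sub, h1]
    rw [← h]; abel
  have hAC : A * C = 1 + B * C := by
    have h : A * C - B * C = 1 := by rw [← Matrix.sub_mul, h2]
    rw [← h]; abel
  have hkey : B * (C * A) = A * (C * B) := by
    rw [hCA, ← Matrix.mul_assoc, hAC, Matrix.mul_add, Matrix.mul_one,
      Matrix.add_mul, Matrix.one_mul, Matrix.mul_assoc]
  refine ⟨?_, ?_, A - B, hAB, ?_⟩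
  · rw [Matrix.fromBlocks_transpose, Matrix.fromBlocks_multiply, Matrix.fromBlocks_multiply]
    simp only [Matrix.transpose_neg, Matrix.transpose_one, Matrix.transpose_mul, hCsymm,
      hB.eq, hA.eq, Matrix.mul_zero, Matrix.zero_mul, Matrix.mul_one, Matrix.one_mul,
      Matrix.mul_neg, Matrix.neg_mul, neg_neg, zero_add, add_zero, neg_zero]
    rw [Matrix.fromBlocks_inj]
    refine ⟨by abel, ?_, ?_, ?_⟩
    · rw [hCA]; abel
    · rw [hAC]; abel
    · rw [Matrix.mul_assoc B C A, hkey]; abel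
  · erw [Matrix.fromBlocks_mul_fromRows, Matrix.fromRows_ext_iff]
    constructor
    · rw [Matrix.mul_one, hCA]; abel
    · simp
  · erw [Matrix.fromBlocks_mul_fromRows, Matrix.fromRows_ext_iff]
    constructor
    · rw [Matrix.mul_one]; abel
    · rw [Matrix.mul_one, Matrix.neg_mul, Matrix.one_mul, sub_eq_neg_add]
end

section
/- Let γ_1, ..., γ_n be a basis of the finite field F_{p^n} over ℤ/pℤ and define matrices B_ℓ ∈ M_n(ℤ/pℤ) by γ_iγ_j = Σ_ℓ (B_ℓ)_{ij} γ_ℓ. Then each B_ℓ is symmetric, and for every nonzero (α_1,...,α_n) ∈ (ℤ/pℤ)ⁿ the matrix Σ_ℓ α_ℓ B_ℓ is invertible. -/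
theorem stmt_15 {p n : ℕ} [Fact p.Prime] (hn : 0 < n) (F : Type*) [Field F]
    [Algebra (ZMod p) F] (γ : Module.Basis (Fin n) (ZMod p) F) :
    let Bmat : Fin n → Matrix (Fin n) (Fin n) (ZMod p) :=
      fun ℓ => Matrix.of fun i j => γ.repr (γ i * γ j) ℓ
    (∀ ℓ, (Bmat ℓ).IsSymm) ∧
    ∀ α : Fin n → ZMod p, α ≠ 0 → IsUnit (∑ ℓ, α ℓ • Bmat ℓ) := by
  intro Bmat
  constructor
  · intro ℓ
    ext i j
    simp [Bmat, Matrix.IsSymm, Matrix.transpose_apply, mul_comm]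
  · intro α hα
    set M : Matrix (Fin n) (Fin n) (ZMod p) := ∑ ℓ, α ℓ • Bmat ℓ with hM
    set f : F →ₗ[ZMod p] ZMod p := ∑ ℓ, α ℓ • γ.coord ℓ with hf
    have hfx : ∀ x : F, f x = ∑ ℓ, α ℓ * γ.repr x ℓ := by
      intro x
      simp [hf, LinearMap.sum_apply, Module.Basis.coord_apply]
    have hMij : ∀ i j, M i j = f (γ i * γ j) := by
      intro i j
      simp [hM, hfx, Bmat, Matrix.sum_apply]
    rw [Matrix.isUnit_iff_isUnit_det, isUnit_iff_ne_zero]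
    intro hdet
    obtain ⟨v, hv, hvM⟩ := (Matrix.exists_mulVec_eq_zero_iff).mpr hdet
    set y : F := ∑ j, v j • γ j with hy
    have hy0 : y ≠ 0 := by
      intro h
      apply hv
      funext j
      have := congrArg (fun z => γ.repr z j) h
      simpa [hy, Finsupp.single_apply, Finset.sum_ite_eq'] using this
    have hfy : ∀ i, f (γ i * y) = 0 := by
      intro i
      have := congrFun hvM i
      simp only [Matrix.mulVec, dotProduct, Pi.zero_apply] at this
      rw [hy, Finset.mul_sum, map_sum]
      rw [← this]
      apply Finset.sum_congr rfl
      intro j _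
      rw [mul_smul_comm, map_smul, smul_eq_mul, hMij i j, mul_comm]
    have hfxy : ∀ x : F, f (x * y) = 0 := by
      intro x
      conv_lhs => rw [← γ.sum_repr x]
      rw [Finset.sum_mul, map_sum]
      apply Finset.sum_eq_zero
      intro i _
      rw [smul_mul_assoc, map_smul, hfy i, smul_zero]
    have hαℓ : ∀ ℓ, α ℓ = 0 := by
      intro ℓ
      have := hfxy (γ ℓ * y⁻¹)
      rw [mul_assoc, inv_mul_cancel₀ hy0, mul_one] at this
      rw [hfx] at this
      simpa [Module.Basis.repr_self, Finsupp.single_apply, Finset.sum_ite_eq'] using this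
    exact hα (funext hαℓ)
end
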